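/- Let n ≥ 1 and let L_S(n) be the 4n×4n real symmetric matrix with diagonal entries 4 at positions j ≡ 0 or 1 (mod 4) and 2 at positions j ≡ 2 or 3 (mod 4), entries −1 on the sub- and super-diagonal, corner entries (L_S)_{1,4n} = (L_S)_{4n,1} = +1, and all other entries 0. For 1 ≤ j ≤ 4n let L_S[j] denote the (4n−1)×(4n−1) matrix obtained from L_S(n) by deleting the j-th row and j-th column. Let μ = 15 + 4√14 and ν = 15 − 4√14. Then for every j with j ≡ 2 or 3 (mod 4), det L_S[j] = (13√14/56)(μ^n − ν^n). -/
import Mathlib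

noncomputable def mu : ℝ := 15 + 4 * Real.sqrt 14
noncomputable def nu : ℝ := 15 - 4 * Real.sqrt 14

/-- The matrix `L_S(n)`: 4n×4n, diagonal entries 4 at (1-indexed) positions ≡ 0,1 (mod 4)
and 2 at positions ≡ 2,3 (mod 4), −1 on the sub/super-diagonal, +1 in the corners. -/
def LS (n : ℕ) : Matrix (Fin (4 * n)) (Fin (4 * n)) ℝ :=
  Matrix.of fun i j =>
    if i.val = j.val then
      (if (i.val + 1) % 4 = 0 ∨ (i.val + 1) % 4 = 1 then 4 else 2)
    else if i.val + 1 = j.val ∨ j.val + 1 = i.val then -1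
    else if (i.val = 0 ∧ j.val = 4 * n - 1) ∨ (j.val = 0 ∧ i.val = 4 * n - 1) then 1
    else 0

/-- Delete the row and column through position `j` of an `(m+1)×(m+1)` matrix. -/
def deleteRC {m : ℕ} (M : Matrix (Fin (m + 1)) (Fin (m + 1)) ℝ) (j : Fin (m + 1)) :
    Matrix (Fin m) (Fin m) ℝ :=
  M.submatrix j.succAbove j.succAbove

/-! ### Tridiagonal determinants -/

def tri (f e : ℕ → ℝ) (m : ℕ) : Matrix (Fin m) (Fin m) ℝ :=
  Matrix.of fun i j =>
    if (i : ℕ) = j then f i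
    else if (i : ℕ) + 1 = j then e i
    else if (j : ℕ) + 1 = i then e j
    else 0

lemma tri_apply (f e : ℕ → ℝ) (m : ℕ) (i j : Fin m) :
    tri f e m i j = if (i : ℕ) = j then f i
    else if (i : ℕ) + 1 = j then e i
    else if (j : ℕ) + 1 = i then e j
    else 0 := rfl

lemma tri_apply' (f e : ℕ → ℝ) (m : ℕ) (i j : Fin m) (a b : ℕ)
    (ha : (i : ℕ) = a) (hb : (j : ℕ) = b) :
    tri f e m i j = if a = b then f a
    else if a + 1 = b then e a
    else if b + 1 = a then e b
    else 0 := by subst ha; subst hb; rfl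

lemma LS_apply' (n : ℕ) (i j : Fin (4*n)) (a b : ℕ)
    (ha : (i : ℕ) = a) (hb : (j : ℕ) = b) :
    LS n i j = if a = b then
      (if (a + 1) % 4 = 0 ∨ (a + 1) % 4 = 1 then 4 else 2)
    else if a + 1 = b ∨ b + 1 = a then -1
    else if (a = 0 ∧ b = 4 * n - 1) ∨ (b = 0 ∧ a = 4 * n - 1) then 1
    else 0 := by subst ha; subst hb; rfl

lemma succAbove_val {m : ℕ} (p : Fin (m+1)) (i : Fin m) :
    (p.succAbove i).val = if (i : ℕ) < (p : ℕ) then (i : ℕ) else (i : ℕ) + 1 := by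
  rw [Fin.succAbove]
  split_ifs with h1 h2 h2 <;> simp_all [Fin.lt_def]

def Ds (f e : ℕ → ℝ) : ℕ → ℝ
  | 0 => 1
  | 1 => f 0
  | (m+2) => f (m+1) * Ds f e (m+1) - e m ^ 2 * Ds f e m

lemma Ds_step (f e : ℕ → ℝ) (m : ℕ) :
    Ds f e (m+2) = f (m+1) * Ds f e (m+1) - e m ^ 2 * Ds f e m := rfl

lemma tri_det_step (f e : ℕ → ℝ) (m : ℕ) :
    (tri f e (m+2)).det = f (m+1) * (tri f e (m+1)).det - e m ^2 * (tri f e m).det := by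
  have hsv : ∀ (M : ℕ) (p : Fin (M+1)) (i : Fin M),
      ((p.succAbove i) : ℕ) = if (i : ℕ) < (p : ℕ) then (i : ℕ) else (i : ℕ) + 1 :=
    fun _ p i => succAbove_val p i
  rw [Matrix.det_succ_row _ (Fin.last (m+1))]
  rw [Fin.sum_univ_castSucc, Fin.sum_univ_castSucc]
  have h0 : ∀ i : Fin m, tri f e (m+2) (Fin.last (m+1)) (Fin.castSucc (Fin.castSucc i)) = 0 := by
    intro i
    have hi : (i : ℕ) < m := i.isLt
    rw [tri_apply' f e _ _ _ (m+1) (i : ℕ) (Fin.val_last _) (by simp)]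
    rw [if_neg (by omega), if_neg (by omega), if_neg (by omega)]
  simp only [h0, mul_zero, zero_mul, Finset.sum_const_zero, zero_add]
  have hm1 : ((tri f e (m+2)).submatrix (Fin.last (m+1)).succAbove (Fin.last (m+1)).succAbove)
      = tri f e (m+1) := by
    ext a b
    simp only [Matrix.submatrix_apply, Fin.succAbove_last]
    rw [tri_apply' f e _ _ _ (a : ℕ) (b : ℕ) (by simp) (by simp), tri_apply]
  have hlastval : tri f e (m+2) (Fin.last (m+1)) (Fin.last (m+1)) = f (m+1) := by
    rw [tri_apply' f e _ _ _ (m+1) (m+1) (Fin.val_last _) (Fin.val_last _), if_pos rfl]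
  have hsublastval : tri f e (m+2) (Fin.last (m+1)) (Fin.castSucc (Fin.last m)) = e m := by
    rw [tri_apply' f e _ _ _ (m+1) m (Fin.val_last _) (by simp)]
    rw [if_neg (by omega), if_neg (by omega), if_pos (by omega)]
  have hB : ((tri f e (m+2)).submatrix (Fin.last (m+1)).succAbove
        (Fin.castSucc (Fin.last m)).succAbove).det = e m * (tri f e m).det := by
    rw [Matrix.det_succ_column _ (Fin.last m)]
    rw [Fin.sum_univ_castSucc]
    have hz : ∀ i : Fin m,
        (tri f e (m+2)).submatrix (Fin.last (m+1)).succAbove (Fin.castSucc (Fin.last m)).succAbove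
          (Fin.castSucc i) (Fin.last m) = 0 := by
      intro i
      have hi : (i : ℕ) < m := i.isLt
      simp only [Matrix.submatrix_apply]
      rw [tri_apply' f e _ _ _ (i : ℕ) (m+1)
        (by rw [hsv]; simp only [Fin.val_last, Fin.coe_castSucc]; split_ifs <;> omega)
        (by rw [hsv]; simp only [Fin.val_last, Fin.coe_castSucc]; split_ifs <;> omega)]
      rw [if_neg (by omega), if_neg (by omega), if_neg (by omega)]
    simp only [hz, mul_zero, zero_mul, Finset.sum_const_zero, zero_add]
    have hentry : (tri f e (m+2)).submatrix (Fin.last (m+1)).succAbove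
        (Fin.castSucc (Fin.last m)).succAbove (Fin.last m) (Fin.last m) = e m := by
      simp only [Matrix.submatrix_apply]
      rw [tri_apply' f e _ _ _ m (m+1)
        (by rw [hsv]; simp only [Fin.val_last, Fin.coe_castSucc]; split_ifs <;> omega)
        (by rw [hsv]; simp only [Fin.val_last, Fin.coe_castSucc]; split_ifs <;> omega)]
      rw [if_neg (by omega), if_pos (by omega)]
    have hminor : ((tri f e (m+2)).submatrix (Fin.last (m+1)).succAbove
          (Fin.castSucc (Fin.last m)).succAbove).submatrix (Fin.last m).succAbove
          (Fin.last m).succAbove = tri f e m := by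
      ext a b
      have ha : (a : ℕ) < m := a.isLt
      have hb : (b : ℕ) < m := b.isLt
      simp only [Matrix.submatrix_apply]
      rw [tri_apply' f e _ _ _ (a : ℕ) (b : ℕ)
        (by rw [hsv, hsv]; simp only [Fin.val_last, Fin.coe_castSucc]; split_ifs <;> omega)
        (by rw [hsv, hsv]; simp only [Fin.val_last, Fin.coe_castSucc]; split_ifs <;> omega),
        tri_apply]
    rw [hentry, hminor]
    simp only [Fin.val_last]
    rw [show ((-1:ℝ))^((m:ℕ)+(m:ℕ)) = 1 by rw [← two_mul, pow_mul]; norm_num]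
    ring
  rw [hm1, hlastval, hsublastval, hB]
  simp only [Fin.val_last, Fin.coe_castSucc]
  rw [show ((-1:ℝ))^((m+1)+(m+1)) = 1 by rw [← two_mul, pow_mul]; norm_num]
  rw [show ((-1:ℝ))^((m+1)+m) = -1 by
    rw [show (m+1)+m = 2*m+1 by ring, pow_succ, pow_mul]; norm_num]
  ring

lemma det_tri (f e : ℕ → ℝ) : ∀ m, (tri f e m).det = Ds f e m := by
  intro m
  induction m using Nat.strong_induction_on with
  | _ m ih =>
    match m with
    | 0 => simp [Ds, Matrix.det_fin_zero]
    | 1 => simp [Ds, Matrix.det_fin_one, tri]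
    | (m+2) =>
      rw [tri_det_step, Ds_step, ih (m+1) (by omega), ih m (by omega)]

def D1 (f : ℕ → ℝ) : ℕ → ℝ
  | 0 => 1
  | 1 => f 0
  | (m+2) => f (m+1) * D1 f (m+1) - D1 f m

lemma D1_step (f : ℕ → ℝ) (m : ℕ) : D1 f (m+2) = f (m+1) * D1 f (m+1) - D1 f m := rfl

lemma Ds_eq_D1 (f e : ℕ → ℝ) (he : ∀ k, e k ^ 2 = 1) : ∀ m, Ds f e m = D1 f m := by
  intro m
  induction m using Nat.strong_induction_on with
  | _ m ih =>
    match m with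
    | 0 => rfl
    | 1 => rfl
    | (m+2) =>
      rw [Ds_step, D1_step, ih (m+1) (by omega), ih m (by omega), he m]
      ring

def fA (k : ℕ) : ℝ := if k % 4 = 1 ∨ k % 4 = 2 then 4 else 2
def fB (k : ℕ) : ℝ := if k % 4 = 0 ∨ k % 4 = 1 then 4 else 2

noncomputable def XA (n : ℕ) : ℝ :=
  (7/2 + 53*Real.sqrt 14/56) * mu^n + (7/2 - 53*Real.sqrt 14/56) * nu^n
noncomputable def XB (n : ℕ) : ℝ :=
  (15/2 + 113*Real.sqrt 14/56) * mu^n + (15/2 - 113*Real.sqrt 14/56) * nu^n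
noncomputable def YY (n : ℕ) : ℝ := (13*Real.sqrt 14/56) * (mu^(n+1) - nu^(n+1))

lemma hs14 : Real.sqrt 14 ^ 2 = 14 := Real.sq_sqrt (by norm_num)

lemma algA1 (m : ℕ) : XA (m+1) = 10 * YY m - 7 * XA m := by
  have hs := hs14
  simp only [XA, YY, mu, nu, pow_succ]
  linear_combination (-(11/2) * ((15+4*Real.sqrt 14)^m + (15-4*Real.sqrt 14)^m)) * hs

lemma algA2 (m : ℕ) : YY (m+1) = 37 * YY m - 26 * XA m := by
  have hs := hs14
  simp only [XA, YY, mu, nu, pow_succ]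
  linear_combination ((-13/2 + 26*Real.sqrt 14/7) * (15+4*Real.sqrt 14)^m
    + (-13/2 - 26*Real.sqrt 14/7) * (15-4*Real.sqrt 14)^m) * hs

lemma algB1 (m : ℕ) : XB (m+1) = 26 * YY m - 15 * XB m := by
  have hs := hs14
  simp only [XB, YY, mu, nu, pow_succ]
  linear_combination (-(225/14) * ((15+4*Real.sqrt 14)^m + (15-4*Real.sqrt 14)^m)) * hs

lemma algB2 (m : ℕ) : YY (m+1) = 45 * YY m - 26 * XB m := by
  have hs := hs14
  simp only [XB, YY, mu, nu, pow_succ]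
  linear_combination ((-195/14 + 26*Real.sqrt 14/7) * (15+4*Real.sqrt 14)^m
    + (-195/14 - 26*Real.sqrt 14/7) * (15-4*Real.sqrt 14)^m) * hs

lemma mainA : ∀ m : ℕ, D1 fA (4*m+2) = XA m ∧ D1 fA (4*m+3) = YY m := by
  intro m
  induction m with
  | zero =>
    constructor
    · show D1 fA (0+2) = XA 0
      rw [D1_step]
      show fA 1 * D1 fA 1 - D1 fA 0 = XA 0
      have h1 : D1 fA 1 = fA 0 := rfl
      have h0 : D1 fA 0 = 1 := rfl
      rw [h1, h0]
      simp only [fA, XA]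
      norm_num
    · show D1 fA (1+2) = YY 0
      rw [D1_step]
      show fA 2 * D1 fA (0+2) - D1 fA 1 = YY 0
      rw [D1_step]
      have h1 : D1 fA 1 = fA 0 := rfl
      have h0 : D1 fA 0 = 1 := rfl
      rw [h1, h0]
      have hs := hs14
      simp only [fA, YY, mu, nu]
      norm_num
      linear_combination (-13/7) * hs
  | succ m ih =>
    obtain ⟨hX, hY⟩ := ih
    have f3 : fA (4*m+3) = 2 := by simp only [fA]; rw [if_neg (by omega)]
    have f4 : fA (4*m+4) = 2 := by simp only [fA]; rw [if_neg (by omega)]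
    have f5 : fA (4*m+5) = 4 := by simp only [fA]; rw [if_pos (by omega)]
    have f6 : fA (4*m+6) = 4 := by simp only [fA]; rw [if_pos (by omega)]
    have h4 : D1 fA (4*m+4) = 2 * YY m - XA m := by
      rw [show 4*m+4 = (4*m+2)+2 by ring, D1_step, show 4*m+2+1 = 4*m+3 by ring, f3, hY, hX]
    have h5 : D1 fA (4*m+5) = 2 * (2 * YY m - XA m) - YY m := by
      rw [show 4*m+5 = (4*m+3)+2 by ring, D1_step, show 4*m+3+1 = 4*m+4 by ring, f4, h4, hY]
    have h6 : D1 fA (4*m+6) = 4 * (2 * (2 * YY m - XA m) - YY m) - (2 * YY m - XA m) := by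
      rw [show 4*m+6 = (4*m+4)+2 by ring, D1_step, show 4*m+4+1 = 4*m+5 by ring, f5, h5, h4]
    have h7 : D1 fA (4*m+7) = 4 * (4 * (2 * (2 * YY m - XA m) - YY m) - (2 * YY m - XA m))
        - (2 * (2 * YY m - XA m) - YY m) := by
      rw [show 4*m+7 = (4*m+5)+2 by ring, D1_step, show 4*m+5+1 = 4*m+6 by ring, f6, h6, h5]
    constructor
    · rw [show 4*(m+1)+2 = 4*m+6 by ring, h6, algA1]; ring
    · rw [show 4*(m+1)+3 = 4*m+7 by ring, h7, algA2]; ring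

lemma mainB : ∀ m : ℕ, D1 fB (4*m+2) = XB m ∧ D1 fB (4*m+3) = YY m := by
  intro m
  induction m with
  | zero =>
    constructor
    · show D1 fB (0+2) = XB 0
      rw [D1_step]
      show fB 1 * D1 fB 1 - D1 fB 0 = XB 0
      have h1 : D1 fB 1 = fB 0 := rfl
      have h0 : D1 fB 0 = 1 := rfl
      rw [h1, h0]
      simp only [fB, XB]
      norm_num
    · show D1 fB (1+2) = YY 0
      rw [D1_step]
      show fB 2 * D1 fB (0+2) - D1 fB 1 = YY 0
      rw [D1_step]
      have h1 : D1 fB 1 = fB 0 := rfl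
      have h0 : D1 fB 0 = 1 := rfl
      rw [h1, h0]
      have hs := hs14
      simp only [fB, YY, mu, nu]
      norm_num
      linear_combination (-13/7) * hs
  | succ m ih =>
    obtain ⟨hX, hY⟩ := ih
    have f3 : fB (4*m+3) = 2 := by simp only [fB]; rw [if_neg (by omega)]
    have f4 : fB (4*m+4) = 4 := by simp only [fB]; rw [if_pos (by omega)]
    have f5 : fB (4*m+5) = 4 := by simp only [fB]; rw [if_pos (by omega)]
    have f6 : fB (4*m+6) = 2 := by simp only [fB]; rw [if_neg (by omega)]
    have h4 : D1 fB (4*m+4) = 2 * YY m - XB m := by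
      rw [show 4*m+4 = (4*m+2)+2 by ring, D1_step, show 4*m+2+1 = 4*m+3 by ring, f3, hY, hX]
    have h5 : D1 fB (4*m+5) = 4 * (2 * YY m - XB m) - YY m := by
      rw [show 4*m+5 = (4*m+3)+2 by ring, D1_step, show 4*m+3+1 = 4*m+4 by ring, f4, h4, hY]
    have h6 : D1 fB (4*m+6) = 4 * (4 * (2 * YY m - XB m) - YY m) - (2 * YY m - XB m) := by
      rw [show 4*m+6 = (4*m+4)+2 by ring, D1_step, show 4*m+4+1 = 4*m+5 by ring, f5, h5, h4]
    have h7 : D1 fB (4*m+7) = 2 * (4 * (4 * (2 * YY m - XB m) - YY m) - (2 * YY m - XB m))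
        - (4 * (2 * YY m - XB m) - YY m) := by
      rw [show 4*m+7 = (4*m+5)+2 by ring, D1_step, show 4*m+5+1 = 4*m+6 by ring, f6, h6, h5]
    constructor
    · rw [show 4*(m+1)+2 = 4*m+6 by ring, h6, algB1]; ring
    · rw [show 4*(m+1)+3 = 4*m+7 by ring, h7, algB2]; ring

def fT (n J k : ℕ) : ℝ :=
  if ((k + J + 1) % (4*n) + 1) % 4 = 0 ∨ ((k + J + 1) % (4*n) + 1) % 4 = 1 then 4 else 2
def eT (n J k : ℕ) : ℝ := if k = 4*n - 2 - J then 1 else -1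

lemma core (n J a b A B : ℕ) (hn : 1 ≤ n) (hJ1 : 1 ≤ J) (hJ2 : J ≤ 4*n-2)
    (haA : A + J + 1 = a ∨ A + J + 1 = a + 4*n)
    (hbB : B + J + 1 = b ∨ B + J + 1 = b + 4*n)
    (ha : a < 4*n) (hb : b < 4*n) (hA : A < 4*n-1) (hB : B < 4*n-1) :
    (if a = b then (if (a+1)%4 = 0 ∨ (a+1)%4 = 1 then (4:ℝ) else 2)
     else if a+1 = b ∨ b+1 = a then -1
     else if (a = 0 ∧ b = 4*n-1) ∨ (b = 0 ∧ a = 4*n-1) then 1 else 0)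
    = (if A = B then fT n J A
       else if A+1 = B then eT n J A
       else if B+1 = A then eT n J B
       else 0) := by
  unfold fT eT
  have hAmod : (A+J+1) % (4*n) = a := by
    rcases haA with h | h
    · rw [h]; exact Nat.mod_eq_of_lt ha
    · rw [h, Nat.add_mod_right]; exact Nat.mod_eq_of_lt ha
  rw [hAmod]
  split_ifs <;> first | rfl | omega

theorem stmt_6 (n : ℕ) (hn : 1 ≤ n) (j : Fin (4 * n))
    (hj : (j.val + 1) % 4 = 2 ∨ (j.val + 1) % 4 = 3) :
    (deleteRC
        ((LS n).reindex (finCongr (by omega : 4 * n = (4 * n - 1) + 1))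
          (finCongr (by omega : 4 * n = (4 * n - 1) + 1)))
        (Fin.cast (by omega) j)).det
      = (13 * Real.sqrt 14 / 56) * (mu ^ n - nu ^ n) := by
  have hJlt : (j : ℕ) < 4*n := j.isLt
  have hJ1 : 1 ≤ (j : ℕ) := by omega
  have hJ2 : (j : ℕ) ≤ 4*n-2 := by omega
  have hM : 0 < 4*n - 1 := by omega
  set c : ℕ := 4*n - 1 - (j:ℕ) with hc
  have hπlt : ∀ p : Fin (4*n-1), ((p:ℕ) + c) % (4*n-1) < 4*n-1 := fun _ => Nat.mod_lt _ hM
  set π : Fin (4*n-1) → Fin (4*n-1) := fun p => ⟨((p:ℕ) + c) % (4*n-1), hπlt p⟩ with hπ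
  have hπinj : Function.Injective π := by
    intro x y hxy
    have h1 : ((x:ℕ) + c) % (4*n-1) = ((y:ℕ) + c) % (4*n-1) := congrArg Fin.val hxy
    have h2 : (x:ℕ) ≡ (y:ℕ) [MOD 4*n-1] := Nat.ModEq.add_right_cancel' c h1
    rw [Nat.ModEq, Nat.mod_eq_of_lt x.isLt, Nat.mod_eq_of_lt y.isLt] at h2
    exact Fin.ext h2
  set πE : Fin (4*n-1) ≃ Fin (4*n-1) :=
    Equiv.ofBijective π (Finite.injective_iff_bijective.mp hπinj) with hπE
  have hπval : ∀ p : Fin (4*n-1), ((πE p : Fin (4*n-1)) : ℕ) = ((p:ℕ) + c) % (4*n-1) :=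
    fun p => rfl
  have haA : ∀ p : Fin (4*n-1),
      ((p:ℕ) + c) % (4*n-1) + (j:ℕ) + 1 = (if (p:ℕ) < (j:ℕ) then (p:ℕ) else (p:ℕ)+1)
      ∨ ((p:ℕ) + c) % (4*n-1) + (j:ℕ) + 1 = (if (p:ℕ) < (j:ℕ) then (p:ℕ) else (p:ℕ)+1) + 4*n := by
    intro p
    have hp : (p:ℕ) < 4*n-1 := p.isLt
    rcases Nat.lt_or_ge (p:ℕ) (j:ℕ) with h | h
    · rw [if_pos h, Nat.mod_eq_of_lt (by omega)]
      omega
    · rw [if_neg (by omega), show (p:ℕ) + c = ((p:ℕ)-(j:ℕ)) + (4*n-1) by omega,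
        Nat.add_mod_right, Nat.mod_eq_of_lt (by omega)]
      omega
  have key : (deleteRC
        ((LS n).reindex (finCongr (by omega : 4 * n = (4 * n - 1) + 1))
          (finCongr (by omega : 4 * n = (4 * n - 1) + 1)))
        (Fin.cast (by omega) j))
      = (tri (fT n (j:ℕ)) (eT n (j:ℕ)) (4*n-1)).submatrix πE πE := by
    ext p q
    have hp : (p:ℕ) < 4*n-1 := p.isLt
    have hq : (q:ℕ) < 4*n-1 := q.isLt
    simp only [deleteRC, Matrix.reindex_apply, Matrix.submatrix_apply, finCongr_symm,
      finCongr_apply]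
    rw [LS_apply' n _ _ (if (p:ℕ) < (j:ℕ) then (p:ℕ) else (p:ℕ)+1)
        (if (q:ℕ) < (j:ℕ) then (q:ℕ) else (q:ℕ)+1)
        (by simp only [Fin.coe_cast]; rw [succAbove_val]; simp only [Fin.coe_cast])
        (by simp only [Fin.coe_cast]; rw [succAbove_val]; simp only [Fin.coe_cast])]
    rw [tri_apply' _ _ _ _ _ (((p:ℕ) + c) % (4*n-1)) (((q:ℕ) + c) % (4*n-1))
        (hπval p) (hπval q)]
    exact core n (j:ℕ) _ _ _ _ hn hJ1 hJ2 (haA p) (haA q)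
      (by split_ifs <;> omega) (by split_ifs <;> omega) (hπlt p) (hπlt q)
  rw [key, Matrix.det_submatrix_equiv_self, det_tri,
    Ds_eq_D1 _ _ (fun k => by unfold eT; split_ifs <;> norm_num)]
  have hfmod : ∀ k, ((k + (j:ℕ) + 1) % (4*n) + 1) % 4 = (k + (j:ℕ) + 2) % 4 := by
    intro k
    have h1 : (k + (j:ℕ) + 1) % (4*n) % 4 = (k + (j:ℕ) + 1) % 4 :=
      Nat.mod_mod_of_dvd _ ⟨n, by ring⟩
    omega
  have hJ4 : (j:ℕ) % 4 = 1 ∨ (j:ℕ) % 4 = 2 := by omega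
  rcases hJ4 with h1 | h1
  · have hff : fT n (j:ℕ) = fA := by
      funext k
      unfold fT fA
      rw [hfmod k]
      exact if_congr (by omega) rfl rfl
    rw [hff, show 4*n-1 = 4*(n-1)+3 by omega, (mainA (n-1)).2]
    unfold YY
    rw [show n-1+1 = n by omega]
  · have hff : fT n (j:ℕ) = fB := by
      funext k
      unfold fT fB
      rw [hfmod k]
      exact if_congr (by omega) rfl rfl
    rw [hff, show 4*n-1 = 4*(n-1)+3 by omega, (mainB (n-1)).2]
    unfold YY
    rw [show n-1+1 = n by omega]
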